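/- Let G = G₁ ⊗ G₂ be the join of two finite simple graphs, let k be a positive integer, and let f_s, f_t be extended k-colorings of G with |f_s⁻¹(c)| = |f_t⁻¹(c)| for every c ∈ {1,…,k} ∪ {∗} (a valid instance). Suppose that the set of swappable colors of the restriction f_s¹ of f_s to V(G₁) is empty, or the set of swappable colors of the restriction f_s² of f_s to V(G₂) is empty. Then f_s and f_t are reconfigurable under color swapping in G if and only if f_s¹ and f_t¹ are reconfigurable in G₁ and f_s² and f_t² are reconfigurable in G₂. -/
import Mathlib


/-- An extended `k`-coloring of `G`: a map `V → {1,…,k} ∪ {∗}` (with `∗ = none`)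
such that adjacent vertices get different colors unless both get `∗`. -/
def IsExtColoring {V : Type*} (G : SimpleGraph V) (k : ℕ) (f : V → Option ℕ) : Prop :=
  (∀ v i, f v = some i → i ∈ Finset.Icc 1 k) ∧
    ∀ ⦃u w : V⦄, G.Adj u w → f u = f w → f u = none

/-- Two extended colorings are adjacent under color swapping: there is an edge
`uw` whose endpoint colors are exchanged, all other vertices keep their color,
and the two colorings are distinct. -/
def ExtCSAdj {V : Type*} (G : SimpleGraph V) (f f' : V → Option ℕ) : Prop :=
  f ≠ f' ∧ ∃ u w : V, G.Adj u w ∧ f u = f' w ∧ f w = f' u ∧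
    ∀ x : V, x ≠ u → x ≠ w → f x = f' x

/-- One step of color-swapping reconfiguration between extended `k`-colorings. -/
def ExtCSStep {V : Type*} (G : SimpleGraph V) (k : ℕ) (f f' : V → Option ℕ) : Prop :=
  IsExtColoring G k f ∧ IsExtColoring G k f' ∧ ExtCSAdj G f f'

/-- Two extended `k`-colorings are reconfigurable under color swapping. -/
def ExtReconf {V : Type*} (G : SimpleGraph V) (k : ℕ) :
    (V → Option ℕ) → (V → Option ℕ) → Prop :=
  Relation.ReflTransGen (ExtCSStep G k)

/-- The set of swappable colors of an extended coloring `f`: the colors used by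
exactly one vertex, together with `∗` whenever some vertex is colored `∗`. -/
def swappableSet {V : Type*} (f : V → Option ℕ) : Set (Option ℕ) :=
  {c | (∃! v, f v = c) ∨ (c = none ∧ ∃ v, f v = none)}

/-- The disjoint union `G₁ ⊕ G₂`. -/
def graphSum {V₁ V₂ : Type*} (G₁ : SimpleGraph V₁) (G₂ : SimpleGraph V₂) :
    SimpleGraph (V₁ ⊕ V₂) :=
  SimpleGraph.fromRel (fun x y =>
    match x, y with
    | Sum.inl u, Sum.inl v => G₁.Adj u v
    | Sum.inr u, Sum.inr v => G₂.Adj u v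
    | _, _ => False)

/-- The join `G₁ ⊗ G₂`: the disjoint union together with all edges between the
two sides. -/
def graphJoin {V₁ V₂ : Type*} (G₁ : SimpleGraph V₁) (G₂ : SimpleGraph V₂) :
    SimpleGraph (V₁ ⊕ V₂) :=
  SimpleGraph.fromRel (fun x y =>
    match x, y with
    | Sum.inl u, Sum.inl v => G₁.Adj u v
    | Sum.inr u, Sum.inr v => G₂.Adj u v
    | Sum.inl _, Sum.inr _ => True
    | Sum.inr _, Sum.inl _ => False)

set_option linter.unusedSectionVars false

/- auxiliary development -/


private def cnt {W : Type*} [Fintype W] (g : W → Option ℕ) (c : Option ℕ) : ℕ :=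
  (Finset.univ.filter fun v => g v = c).card

section cntlemmas
variable {W : Type*} [Fintype W] {g g' : W → Option ℕ} {c : Option ℕ}

private lemma cnt_pos {v : W} (h : g v = c) : 1 ≤ cnt g c :=
  Finset.card_pos.mpr ⟨v, by simp [h]⟩

private lemma exists_of_cnt_pos (h : 1 ≤ cnt g c) : ∃ v, g v = c := by
  obtain ⟨v, hv⟩ := Finset.card_pos.mp h
  exact ⟨v, (Finset.mem_filter.mp hv).2⟩

private lemma exists_dup {v : W} (hv : g v = c) (h : cnt g c ≠ 1) :
    ∃ v', v' ≠ v ∧ g v' = c := by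
  have h1 : 1 < cnt g c := lt_of_le_of_ne (cnt_pos hv) (Ne.symm h)
  obtain ⟨b, hb, hbv⟩ := Finset.exists_mem_ne h1 v
  exact ⟨b, hbv, (Finset.mem_filter.mp hb).2⟩

private lemma swapEmpty (h : swappableSet g = ∅) :
    cnt g none = 0 ∧ ∀ c, cnt g c ≠ 1 := by
  have h' : ∀ c, c ∉ swappableSet g := by simp [h]
  constructor
  · by_contra hc
    obtain ⟨v, hv⟩ := exists_of_cnt_pos (Nat.one_le_iff_ne_zero.mpr hc)
    exact h' none (Or.inr ⟨rfl, v, hv⟩)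
  · intro c hc
    obtain ⟨v, hv⟩ := Finset.card_eq_one.mp hc
    refine h' c (Or.inl ⟨v, ?_, ?_⟩)
    · have : v ∈ Finset.univ.filter fun x => g x = c := hv ▸ Finset.mem_singleton_self v
      exact (Finset.mem_filter.mp this).2
    · intro y hy
      have : y ∈ Finset.univ.filter fun x => g x = c := Finset.mem_filter.mpr ⟨Finset.mem_univ y, hy⟩
      rw [hv] at this
      exact Finset.mem_singleton.mp this

private lemma cnt_eq_of_swap {u w : W}
    (h1 : g u = g' w) (h2 : g w = g' u) (h3 : ∀ x, x ≠ u → x ≠ w → g x = g' x) (c : Option ℕ) :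
    cnt g c = cnt g' c := by
  classical
  have hg' : g' = g ∘ Equiv.swap u w := by
    funext x
    rcases eq_or_ne x u with rfl | hxu
    · simpa [Function.comp, Equiv.swap_apply_left] using h2.symm
    rcases eq_or_ne x w with rfl | hxw
    · simpa [Function.comp, Equiv.swap_apply_right] using h1.symm
    · simpa [Function.comp, Equiv.swap_apply_of_ne_of_ne hxu hxw] using (h3 x hxu hxw).symm
  rw [hg']
  apply Finset.card_equiv (Equiv.swap u w)
  intro v
  simp [Function.comp, Equiv.swap_apply_self]

end cntlemmas

section joinsec
variable {V₁ V₂ : Type*} [Fintype V₁] [Fintype V₂]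
variable {G₁ : SimpleGraph V₁} {G₂ : SimpleGraph V₂} {k : ℕ}

private lemma join_adj_ll {u v : V₁} :
    (graphJoin G₁ G₂).Adj (Sum.inl u) (Sum.inl v) ↔ G₁.Adj u v := by
  simp only [graphJoin, SimpleGraph.fromRel_adj, ne_eq, Sum.inl.injEq]
  exact ⟨fun ⟨hne, h⟩ => h.elim id fun h => h.symm, fun h => ⟨h.ne, Or.inl h⟩⟩

private lemma join_adj_rr {u v : V₂} :
    (graphJoin G₁ G₂).Adj (Sum.inr u) (Sum.inr v) ↔ G₂.Adj u v := by
  simp only [graphJoin, SimpleGraph.fromRel_adj, ne_eq, Sum.inr.injEq]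
  exact ⟨fun ⟨hne, h⟩ => h.elim id fun h => h.symm, fun h => ⟨h.ne, Or.inl h⟩⟩

private lemma join_adj_lr (u : V₁) (w : V₂) : (graphJoin G₁ G₂).Adj (Sum.inl u) (Sum.inr w) := by
  simp only [graphJoin, SimpleGraph.fromRel_adj, ne_eq]
  exact ⟨by simp, Or.inl trivial⟩

private lemma isExt_restrict_l {f : V₁ ⊕ V₂ → Option ℕ}
    (h : IsExtColoring (graphJoin G₁ G₂) k f) : IsExtColoring G₁ k (f ∘ Sum.inl) :=
  ⟨fun v i hv => h.1 (Sum.inl v) i hv, fun _ _ hadj heq => h.2 (join_adj_ll.mpr hadj) heq⟩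

private lemma isExt_restrict_r {f : V₁ ⊕ V₂ → Option ℕ}
    (h : IsExtColoring (graphJoin G₁ G₂) k f) : IsExtColoring G₂ k (f ∘ Sum.inr) :=
  ⟨fun v i hv => h.1 (Sum.inr v) i hv, fun _ _ hadj heq => h.2 (join_adj_rr.mpr hadj) heq⟩

private lemma isExt_elim {g₁ : V₁ → Option ℕ} {g₂ : V₂ → Option ℕ}
    (h₁ : IsExtColoring G₁ k g₁) (h₂ : IsExtColoring G₂ k g₂)
    (hcross : ∀ u w, g₁ u ≠ g₂ w) :
    IsExtColoring (graphJoin G₁ G₂) k (Sum.elim g₁ g₂) := by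
  constructor
  · rintro (v | v) i hv
    · exact h₁.1 v i hv
    · exact h₂.1 v i hv
  · rintro (u | u) (w | w) hadj heq
    · exact h₁.2 (join_adj_ll.mp hadj) heq
    · exact absurd heq (hcross u w)
    · exact absurd heq.symm (hcross w u)
    · exact h₂.2 (join_adj_rr.mp hadj) heq

/-- Side-wise counts of `f` agree with those of `fs`. -/
private def SideInv (fs f : V₁ ⊕ V₂ → Option ℕ) : Prop :=
  (∀ c, cnt (f ∘ Sum.inl) c = cnt (fs ∘ Sum.inl) c) ∧
  ∀ c, cnt (f ∘ Sum.inr) c = cnt (fs ∘ Sum.inr) c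

variable {fs : V₁ ⊕ V₂ → Option ℕ}

private lemma cross_ne (hfs : IsExtColoring (graphJoin G₁ G₂) k fs)
    (hempty : swappableSet (fs ∘ Sum.inl) = ∅ ∨ swappableSet (fs ∘ Sum.inr) = ∅)
    {f : V₁ ⊕ V₂ → Option ℕ} (hf : SideInv fs f) (u : V₁) (w : V₂) :
    f (Sum.inl u) ≠ f (Sum.inr w) := by
  intro h
  have h1 : 1 ≤ cnt (fs ∘ Sum.inl) (f (Sum.inl u)) :=
    hf.1 _ ▸ cnt_pos (g := f ∘ Sum.inl) (v := u) rfl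
  have h2 : 1 ≤ cnt (fs ∘ Sum.inr) (f (Sum.inl u)) := by
    rw [← hf.2]
    exact cnt_pos (g := f ∘ Sum.inr) (v := w) h.symm
  obtain ⟨u', hu'⟩ := exists_of_cnt_pos h1
  obtain ⟨w', hw'⟩ := exists_of_cnt_pos h2
  have hnone : fs (Sum.inl u') = none :=
    hfs.2 (join_adj_lr u' w') (show fs (Sum.inl u') = fs (Sum.inr w') from hu'.trans hw'.symm)
  rcases hempty with he | he
  · have := (swapEmpty he).1
    exact absurd (cnt_pos (g := fs ∘ Sum.inl) (v := u') hnone) (by omega)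
  · have := (swapEmpty he).1
    have hw'' : fs (Sum.inr w') = none := hw'.trans (hu'.symm.trans hnone)
    exact absurd (cnt_pos (g := fs ∘ Sum.inr) (v := w') hw'') (by omega)

private lemma no_cross_swap (hfs : IsExtColoring (graphJoin G₁ G₂) k fs)
    (hempty : swappableSet (fs ∘ Sum.inl) = ∅ ∨ swappableSet (fs ∘ Sum.inr) = ∅)
    {f f' : V₁ ⊕ V₂ → Option ℕ} (hf : SideInv fs f)
    (hcf' : IsExtColoring (graphJoin G₁ G₂) k f')
    (a : V₁) (b : V₂) (hne : f ≠ f')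
    (huw : f (Sum.inl a) = f' (Sum.inr b)) (hwu : f (Sum.inr b) = f' (Sum.inl a))
    (hoth : ∀ x, x ≠ Sum.inl a → x ≠ Sum.inr b → f x = f' x) : False := by
  have hdne : f (Sum.inl a) ≠ f (Sum.inr b) := cross_ne hfs hempty hf a b
  rcases hempty with he | he
  · obtain ⟨hn, hone⟩ := swapEmpty he
    have hanone : f (Sum.inl a) ≠ none := by
      intro h0
      have := cnt_pos (g := f ∘ Sum.inl) (v := a) (c := none) h0
      rw [hf.1, hn] at this; omega
    obtain ⟨a', ha'ne, ha'⟩ :=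
      exists_dup (g := f ∘ Sum.inl) (v := a) (c := f (Sum.inl a)) rfl
        (by rw [hf.1]; exact hone _)
    have h1 : f' (Sum.inl a') = f' (Sum.inr b) := by
      rw [← hoth (Sum.inl a') (by simp [ha'ne]) (by simp), ← huw]; exact ha'
    have := hcf'.2 (join_adj_lr a' b) h1
    rw [← hoth (Sum.inl a') (by simp [ha'ne]) (by simp)] at this
    exact hanone (ha'.symm.trans this)
  · obtain ⟨hn, hone⟩ := swapEmpty he
    have hbnone : f (Sum.inr b) ≠ none := by
      intro h0
      have := cnt_pos (g := f ∘ Sum.inr) (v := b) (c := none) h0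
      rw [hf.2, hn] at this; omega
    obtain ⟨b', hb'ne, hb'⟩ :=
      exists_dup (g := f ∘ Sum.inr) (v := b) (c := f (Sum.inr b)) rfl
        (by rw [hf.2]; exact hone _)
    have h1 : f' (Sum.inl a) = f' (Sum.inr b') := by
      rw [← hoth (Sum.inr b') (by simp) (by simp [hb'ne]), ← hwu]; exact hb'.symm
    have := hcf'.2 (join_adj_lr a b') h1
    rw [← hwu] at this
    exact hbnone this

private lemma step_classify (hfs : IsExtColoring (graphJoin G₁ G₂) k fs)
    (hempty : swappableSet (fs ∘ Sum.inl) = ∅ ∨ swappableSet (fs ∘ Sum.inr) = ∅)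
    {f f' : V₁ ⊕ V₂ → Option ℕ} (hf : SideInv fs f)
    (hstep : ExtCSStep (graphJoin G₁ G₂) k f f') :
    ((f' ∘ Sum.inr = f ∘ Sum.inr) ∧ ExtCSStep G₁ k (f ∘ Sum.inl) (f' ∘ Sum.inl)) ∨
    ((f' ∘ Sum.inl = f ∘ Sum.inl) ∧ ExtCSStep G₂ k (f ∘ Sum.inr) (f' ∘ Sum.inr)) := by
  obtain ⟨hcf, hcf', hne, u, w, hadj, huw, hwu, hoth⟩ := hstep
  match u, w with
  | Sum.inl a, Sum.inl b =>
    left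
    have hr : f' ∘ Sum.inr = f ∘ Sum.inr := by
      funext x; exact (hoth (Sum.inr x) (by simp) (by simp)).symm
    refine ⟨hr, isExt_restrict_l hcf, isExt_restrict_l hcf', ?_, a, b, join_adj_ll.mp hadj,
      huw, hwu, fun x hx1 hx2 => hoth (Sum.inl x) (by simp [hx1]) (by simp [hx2])⟩
    intro hl
    apply hne
    funext x
    rcases x with x | x
    · exact congrFun hl x
    · exact congrFun hr.symm x
  | Sum.inr a, Sum.inr b =>
    right
    have hl : f' ∘ Sum.inl = f ∘ Sum.inl := by
      funext x; exact (hoth (Sum.inl x) (by simp) (by simp)).symm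
    refine ⟨hl, isExt_restrict_r hcf, isExt_restrict_r hcf', ?_, a, b, join_adj_rr.mp hadj,
      huw, hwu, fun x hx1 hx2 => hoth (Sum.inr x) (by simp [hx1]) (by simp [hx2])⟩
    intro hr
    apply hne
    funext x
    rcases x with x | x
    · exact congrFun hl.symm x
    · exact congrFun hr x
  | Sum.inl a, Sum.inr b =>
    exact absurd (no_cross_swap hfs hempty hf hcf' a b hne huw hwu hoth) id
  | Sum.inr b, Sum.inl a =>
    exact absurd (no_cross_swap hfs hempty hf hcf' a b hne hwu huw
      fun x hx1 hx2 => hoth x hx2 hx1) id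

private lemma forward (hfs : IsExtColoring (graphJoin G₁ G₂) k fs)
    (hempty : swappableSet (fs ∘ Sum.inl) = ∅ ∨ swappableSet (fs ∘ Sum.inr) = ∅) :
    ∀ f, ExtReconf (graphJoin G₁ G₂) k fs f →
      SideInv fs f ∧ ExtReconf G₁ k (fs ∘ Sum.inl) (f ∘ Sum.inl) ∧
        ExtReconf G₂ k (fs ∘ Sum.inr) (f ∘ Sum.inr) := by
  intro f h
  induction h with
  | refl => exact ⟨⟨fun _ => rfl, fun _ => rfl⟩, Relation.ReflTransGen.refl,
      Relation.ReflTransGen.refl⟩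
  | tail hab hstep ih =>
    obtain ⟨hinv, h1, h2⟩ := ih
    rcases step_classify hfs hempty hinv hstep with ⟨heq, hs⟩ | ⟨heq, hs⟩
    · obtain ⟨-, -, -, u', w', -, e1, e2, e3⟩ := id hs
      refine ⟨⟨fun c => (cnt_eq_of_swap e1 e2 e3 c).symm.trans (hinv.1 c),
        fun c => by rw [heq]; exact hinv.2 c⟩, h1.tail hs, ?_⟩
      rw [heq]; exact h2
    · obtain ⟨-, -, -, u', w', -, e1, e2, e3⟩ := id hs
      refine ⟨⟨fun c => by rw [heq]; exact hinv.1 c,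
        fun c => (cnt_eq_of_swap e1 e2 e3 c).symm.trans (hinv.2 c)⟩, ?_, h2.tail hs⟩
      rw [heq]; exact h1

end joinsec

section liftsec
variable {V₁ V₂ : Type*} [Fintype V₁] [Fintype V₂]
variable {G₁ : SimpleGraph V₁} {G₂ : SimpleGraph V₂} {k : ℕ} {fs : V₁ ⊕ V₂ → Option ℕ}

private lemma lift_left (hfs : IsExtColoring (graphJoin G₁ G₂) k fs)
    (hempty : swappableSet (fs ∘ Sum.inl) = ∅ ∨ swappableSet (fs ∘ Sum.inr) = ∅) :
    ∀ g, Relation.ReflTransGen (ExtCSStep G₁ k) (fs ∘ Sum.inl) g →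
      (∀ c, cnt g c = cnt (fs ∘ Sum.inl) c) ∧
      ExtReconf (graphJoin G₁ G₂) k fs (Sum.elim g (fs ∘ Sum.inr)) := by
  intro g h
  induction h with
  | refl =>
    refine ⟨fun _ => rfl, ?_⟩
    have he : Sum.elim (fs ∘ Sum.inl) (fs ∘ Sum.inr) = fs := by
      funext x; rcases x with x | x <;> rfl
    rw [he]
    exact Relation.ReflTransGen.refl
  | @tail b c hab hstep ih =>
    obtain ⟨hcnt, hpath⟩ := ih
    obtain ⟨hgb, hgc, hne, u, w, hadj, e1, e2, e3⟩ := id hstep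
    have hcnt' : ∀ cc, cnt c cc = cnt (fs ∘ Sum.inl) cc :=
      fun cc => (cnt_eq_of_swap e1 e2 e3 cc).symm.trans (hcnt cc)
    refine ⟨hcnt', hpath.tail ?_⟩
    have hinvb : SideInv fs (Sum.elim b (fs ∘ Sum.inr)) := ⟨hcnt, fun _ => rfl⟩
    have hinvc : SideInv fs (Sum.elim c (fs ∘ Sum.inr)) := ⟨hcnt', fun _ => rfl⟩
    refine ⟨isExt_elim hgb (isExt_restrict_r hfs) (fun u' w' => cross_ne hfs hempty hinvb u' w'),
      isExt_elim hgc (isExt_restrict_r hfs) (fun u' w' => cross_ne hfs hempty hinvc u' w'),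
      fun hh => hne (funext fun v => congrFun hh (Sum.inl v)),
      Sum.inl u, Sum.inl w, join_adj_ll.mpr hadj, e1, e2, ?_⟩
    rintro (x | x) hx1 hx2
    · exact e3 x (by simpa using hx1) (by simpa using hx2)
    · rfl

private lemma lift_right (hfs : IsExtColoring (graphJoin G₁ G₂) k fs)
    (hempty : swappableSet (fs ∘ Sum.inl) = ∅ ∨ swappableSet (fs ∘ Sum.inr) = ∅)
    {g₁ : V₁ → Option ℕ}
    (hg₁ : IsExtColoring G₁ k g₁) (hc₁ : ∀ c, cnt g₁ c = cnt (fs ∘ Sum.inl) c) :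
    ∀ g, Relation.ReflTransGen (ExtCSStep G₂ k) (fs ∘ Sum.inr) g →
      (∀ c, cnt g c = cnt (fs ∘ Sum.inr) c) ∧
      ExtReconf (graphJoin G₁ G₂) k (Sum.elim g₁ (fs ∘ Sum.inr)) (Sum.elim g₁ g) := by
  intro g h
  induction h with
  | refl => exact ⟨fun _ => rfl, Relation.ReflTransGen.refl⟩
  | @tail b c hab hstep ih =>
    obtain ⟨hcnt, hpath⟩ := ih
    obtain ⟨hgb, hgc, hne, u, w, hadj, e1, e2, e3⟩ := id hstep
    have hcnt' : ∀ cc, cnt c cc = cnt (fs ∘ Sum.inr) cc :=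
      fun cc => (cnt_eq_of_swap e1 e2 e3 cc).symm.trans (hcnt cc)
    refine ⟨hcnt', hpath.tail ?_⟩
    have hinvb : SideInv fs (Sum.elim g₁ b) := ⟨hc₁, hcnt⟩
    have hinvc : SideInv fs (Sum.elim g₁ c) := ⟨hc₁, hcnt'⟩
    refine ⟨isExt_elim hg₁ hgb (fun u' w' => cross_ne hfs hempty hinvb u' w'),
      isExt_elim hg₁ hgc (fun u' w' => cross_ne hfs hempty hinvc u' w'),
      fun hh => hne (funext fun v => congrFun hh (Sum.inr v)),
      Sum.inr u, Sum.inr w, join_adj_rr.mpr hadj, e1, e2, ?_⟩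
    rintro (x | x) hx1 hx2
    · rfl
    · exact e3 x (by simpa using hx1) (by simpa using hx2)

end liftsec


/-- in a join, for a valid instance in which the swappable set of
the restriction of `f_s` to some side is empty, `f_s` and `f_t` are
reconfigurable iff both restrictions are. -/
theorem stmt_15 {V₁ V₂ : Type*} [Fintype V₁] [Fintype V₂]
    (G₁ : SimpleGraph V₁) (G₂ : SimpleGraph V₂) (k : ℕ) (hk : 1 ≤ k)
    (fs ft : V₁ ⊕ V₂ → Option ℕ)
    (hfs : IsExtColoring (graphJoin G₁ G₂) k fs)
    (hft : IsExtColoring (graphJoin G₁ G₂) k ft)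
    (hvalid : ∀ c : Option ℕ,
      (Finset.univ.filter fun v => fs v = c).card =
        (Finset.univ.filter fun v => ft v = c).card)
    (hempty : swappableSet (fs ∘ Sum.inl) = ∅ ∨ swappableSet (fs ∘ Sum.inr) = ∅) :
    ExtReconf (graphJoin G₁ G₂) k fs ft ↔
      ExtReconf G₁ k (fs ∘ Sum.inl) (ft ∘ Sum.inl) ∧
      ExtReconf G₂ k (fs ∘ Sum.inr) (ft ∘ Sum.inr) := by
  constructor
  · intro h
    obtain ⟨-, h1, h2⟩ := forward hfs hempty ft h
    exact ⟨h1, h2⟩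
  · rintro ⟨h1, h2⟩
    obtain ⟨hcnt1, hp1⟩ := lift_left hfs hempty _ h1
    obtain ⟨-, hp2⟩ := lift_right hfs hempty (isExt_restrict_l hft) hcnt1 _ h2
    have hft' : Sum.elim (ft ∘ Sum.inl) (ft ∘ Sum.inr) = ft := by
      funext x; rcases x with x | x <;> rfl
    rw [← hft']
    exact hp1.trans hp2
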